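/- Let n ≥ 2 and let Δ = (Δᵢⱼ) be a symmetric array of reals with Δᵢⱼ = Δⱼᵢ ≥ 2 for all i ≠ j. If for every y ∈ ℝⁿ the n×n symmetric matrix H_n(Δ, y), whose (i,i) entry is 3yᵢ² + ½ Σ_{k≠i} Δᵢₖ yₖ² and whose (i,j) entry for i ≠ j is Δᵢⱼ yᵢ yⱼ, is positive semidefinite, then Δᵢⱼ ≤ 6 for all i ≠ j. -/

import Mathlib

/-!
Take `y = eᵢ + eⱼ`. Testing `Hₙ(Δ, y)` against `eᵢ - eⱼ` gives
`(3 + Δᵢⱼ/2) + (3 + Δⱼᵢ/2) - Δᵢⱼ - Δⱼᵢ ≥ 0`, which by symmetry is `Δᵢⱼ ≤ 6`.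
-/

open Matrix

namespace Matrix.PosSemidef

variable {ι : Type*} [Fintype ι] [DecidableEq ι]

theorem add_apply_le_add_diag {M : Matrix ι ι ℝ} (hM : M.PosSemidef) (i j : ι) :
    M i j + M j i ≤ M i i + M j j := by
  have h := hM.dotProduct_mulVec_nonneg (Pi.single i 1 - Pi.single j 1)
  simp only [star_trivial, mulVec_sub, dotProduct_sub, sub_dotProduct, mulVec_single_one,
    single_one_dotProduct, col_apply] at h
  linarith

end Matrix.PosSemidef

section

variable {ι : Type*} [Fintype ι] [DecidableEq ι]

/-- The matrix `Hₙ(Δ, y)`. -/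
noncomputable def hMatrix (Δ : ι → ι → ℝ) (y : ι → ℝ) : Matrix ι ι ℝ :=
  Matrix.of fun i j =>
    if i = j then 3 * y i ^ 2 + (1 : ℝ) / 2 * ∑ k ∈ Finset.univ.erase i, Δ i k * y k ^ 2
    else Δ i j * y i * y j

variable (Δ : ι → ι → ℝ) {i j : ι}

theorem hMatrix_pair_apply_left (hij : i ≠ j) :
    hMatrix Δ (Pi.single i 1 + Pi.single j 1) i i = 3 + Δ i j / 2 := by
  rw [hMatrix, of_apply, if_pos rfl,
    Finset.sum_eq_single_of_mem j (Finset.mem_erase.2 ⟨hij.symm, Finset.mem_univ j⟩)]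
  · simp [hij, hij.symm, div_eq_inv_mul]
  · intro k hk hkj
    simp [(Finset.mem_erase.1 hk).1, hkj]

theorem hMatrix_pair_apply_right (hij : i ≠ j) :
    hMatrix Δ (Pi.single i 1 + Pi.single j 1) j j = 3 + Δ j i / 2 := by
  rw [add_comm]
  exact hMatrix_pair_apply_left Δ hij.symm

theorem hMatrix_pair_apply_left_right (hij : i ≠ j) :
    hMatrix Δ (Pi.single i 1 + Pi.single j 1) i j = Δ i j := by
  simp [hMatrix, hij, hij.symm]

theorem hMatrix_pair_apply_right_left (hij : i ≠ j) :
    hMatrix Δ (Pi.single i 1 + Pi.single j 1) j i = Δ j i := by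
  rw [add_comm]
  exact hMatrix_pair_apply_left_right Δ hij.symm

end

theorem delta_le_six_of_H_posSemidef {n : ℕ}
    (Δ : Fin n → Fin n → ℝ)
    (hsymm : ∀ i j, i ≠ j → Δ i j = Δ j i)
    (hpsd : ∀ y : Fin n → ℝ,
      (Matrix.of fun i j =>
        if i = j then
          3 * y i ^ 2 + (1 : ℝ) / 2 * ∑ k ∈ Finset.univ.erase i, Δ i k * y k ^ 2
        else Δ i j * y i * y j).PosSemidef) :
    ∀ i j, i ≠ j → Δ i j ≤ 6 := by
  intro i j hij
  have hH : (hMatrix Δ (Pi.single i 1 + Pi.single j 1)).PosSemidef := hpsd _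
  have h := hH.add_apply_le_add_diag i j
  rw [hMatrix_pair_apply_left Δ hij, hMatrix_pair_apply_right Δ hij,
    hMatrix_pair_apply_left_right Δ hij, hMatrix_pair_apply_right_left Δ hij] at h
  linarith [hsymm i j hij]
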